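/- Let A ⊆ ℝ^D be convex, let M be strongly monotone with constant ν > 0 and Lipschitz continuous with constant L > 0, and suppose there is c > 0 with ‖Kᵀμ‖ ≥ c‖μ‖ for all μ ∈ ℝ^n. Let ε > 0, let (a*, λ*) solve VI(W, A × ℝ^n_+) and (a*_ε, λ*_ε) solve VI(W_ε, A × ℝ^n_+), and assume both a* and a*_ε lie in the topological interior of A. Then M(a*) + Kᵀλ* = 0 and M(a*_ε) + Kᵀλ*_ε = 0, hence c‖λ* − λ*_ε‖ ≤ L‖a* − a*_ε‖, and combining with the regularization error bound one obtains ‖a* − a*_ε‖ ≤ ε‖λ*‖L/(cν). -/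

import Mathlib

open scoped RealInnerProductSpace

/-- Matrix-vector multiplication, viewed as a map between Euclidean spaces. -/
noncomputable def mulVecE {n D : ℕ} (K : Matrix (Fin n) (Fin D) ℝ)
    (x : EuclideanSpace ℝ (Fin D)) : EuclideanSpace ℝ (Fin n) :=
  (WithLp.equiv 2 _).symm (K.mulVec ((WithLp.equiv 2 _) x))

lemma mulVecE_sub {n D : ℕ} (K : Matrix (Fin n) (Fin D) ℝ)
    (x y : EuclideanSpace ℝ (Fin D)) :
    mulVecE K (x - y) = mulVecE K x - mulVecE K y := by
  ext i
  simp [mulVecE, Matrix.mulVec, dotProduct, mul_sub, Finset.sum_sub_distrib]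

lemma mulVecE_adjoint {n D : ℕ} (K : Matrix (Fin n) (Fin D) ℝ)
    (μ : EuclideanSpace ℝ (Fin n)) (a : EuclideanSpace ℝ (Fin D)) :
    ⟪mulVecE K.transpose μ, a⟫ = ⟪μ, mulVecE K a⟫ := by
  simp only [mulVecE, PiLp.inner_apply, RCLike.inner_apply, starRingEnd_apply, star_trivial]
  simp only [WithLp.equiv_symm_apply, PiLp.toLp_apply, Matrix.mulVec, dotProduct, Matrix.transpose_apply]
  simp_rw [Finset.sum_mul, Finset.mul_sum]
  rw [Finset.sum_comm]
  apply Finset.sum_congr rfl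
  intro i _
  apply Finset.sum_congr rfl
  intro j _
  show a j * (K i j * μ i) = K i j * a j * μ i
  ring

lemma interior_vi_zero {E : Type*} [NormedAddCommGroup E] [InnerProductSpace ℝ E]
    {A : Set E} {x : E} (hx : x ∈ interior A) (F : E)
    (h : ∀ a ∈ A, 0 ≤ ⟪F, a - x⟫) : F = 0 := by
  rcases Metric.isOpen_iff.1 isOpen_interior x hx with ⟨δ, hδ, hball⟩
  set t := δ / (2 * (‖F‖ + 1)) with ht_def
  have hFn : (0:ℝ) ≤ ‖F‖ := norm_nonneg F
  have ht : 0 < t := div_pos hδ (by positivity)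
  have hmem : x - t • F ∈ A := by
    apply interior_subset (hball ?_)
    rw [Metric.mem_ball, dist_eq_norm]
    have : x - t • F - x = -(t • F) := by abel
    rw [this, norm_neg, norm_smul, Real.norm_eq_abs, abs_of_pos ht, ht_def]
    rw [div_mul_eq_mul_div, div_lt_iff₀ (by positivity)]
    nlinarith
  have h2 := h _ hmem
  have : (x - t • F) - x = -(t • F) := by abel
  rw [this, inner_neg_right, real_inner_smul_right, real_inner_self_eq_norm_sq] at h2
  have : ‖F‖ ^ 2 ≤ 0 := by nlinarith
  have : ‖F‖ = 0 := by nlinarith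
  simpa using this

/-- the case of interior solutions; the first-order conditions become
equalities and the regularization error bound improves to `O(ε)`. -/
theorem stmt_9 (D n : ℕ)
    (A : Set (EuclideanSpace ℝ (Fin D))) (hAconv : Convex ℝ A)
    (K : Matrix (Fin n) (Fin D) ℝ) (l : EuclideanSpace ℝ (Fin n))
    (M : EuclideanSpace ℝ (Fin D) → EuclideanSpace ℝ (Fin D))
    (ν : ℝ) (hν : 0 < ν)
    (hmono : ∀ a₁ a₂ : EuclideanSpace ℝ (Fin D), ν * ‖a₁ - a₂‖ ^ 2 ≤ ⟪M a₁ - M a₂, a₁ - a₂⟫)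
    (L : ℝ) (hL : 0 < L)
    (hLip : ∀ a₁ a₂ : EuclideanSpace ℝ (Fin D), ‖M a₁ - M a₂‖ ≤ L * ‖a₁ - a₂‖)
    (c : ℝ) (hc : 0 < c)
    (hK : ∀ μ : EuclideanSpace ℝ (Fin n), c * ‖μ‖ ≤ ‖mulVecE K.transpose μ‖)
    (ε : ℝ) (hε : 0 < ε)
    (astar aε : EuclideanSpace ℝ (Fin D)) (lstar lε : EuclideanSpace ℝ (Fin n))
    (hastarA : astar ∈ A) (hlstar : ∀ j, 0 ≤ lstar j)
    (haεA : aε ∈ A) (hlε : ∀ j, 0 ≤ lε j)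
    (hVI : ∀ a ∈ A, ∀ lam : EuclideanSpace ℝ (Fin n), (∀ j, 0 ≤ lam j) →
      0 ≤ ⟪M astar + mulVecE K.transpose lstar, a - astar⟫
          + ⟪l - mulVecE K astar, lam - lstar⟫)
    (hVIε : ∀ a ∈ A, ∀ lam : EuclideanSpace ℝ (Fin n), (∀ j, 0 ≤ lam j) →
      0 ≤ ⟪M aε + mulVecE K.transpose lε, a - aε⟫
          + ⟪l - mulVecE K aε + ε • lε, lam - lε⟫)
    (hint : astar ∈ interior A) (hintε : aε ∈ interior A) :
    M astar + mulVecE K.transpose lstar = 0 ∧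
    M aε + mulVecE K.transpose lε = 0 ∧
    c * ‖lstar - lε‖ ≤ L * ‖astar - aε‖ ∧
    ‖astar - aε‖ ≤ ε * ‖lstar‖ * L / (c * ν) := by
  -- first-order conditions
  have hF1 : M astar + mulVecE K.transpose lstar = 0 := by
    apply interior_vi_zero hint
    intro a ha
    have := hVI a ha lstar hlstar
    simpa using this
  have hF2 : M aε + mulVecE K.transpose lε = 0 := by
    apply interior_vi_zero hintε
    intro a ha
    have := hVIε a ha lε hlε
    simpa using this
  have hTg : mulVecE K.transpose (lstar - lε) = M aε - M astar := by
    rw [mulVecE_sub]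
    have h1 : mulVecE K.transpose lstar = -M astar := by
      rw [← sub_eq_zero]; rw [← hF1]; abel
    have h2 : mulVecE K.transpose lε = -M aε := by
      rw [← sub_eq_zero]; rw [← hF2]; abel
    rw [h1, h2]; abel
  have hstep2 : c * ‖lstar - lε‖ ≤ L * ‖astar - aε‖ := by
    calc c * ‖lstar - lε‖ ≤ ‖mulVecE K.transpose (lstar - lε)‖ := hK _
    _ = ‖M astar - M aε‖ := by rw [hTg, ← norm_neg]; congr 1; abel
    _ ≤ L * ‖astar - aε‖ := hLip _ _
  refine ⟨hF1, hF2, hstep2, ?_⟩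
  -- step 3 marker
  have h1 := hVI aε haεA lε hlε
  have h2 := hVIε astar hastarA lstar hlstar
  rw [hF1] at h1
  rw [hF2] at h2
  simp only [inner_zero_left, zero_add] at h1 h2
  have hkey : ν * ‖astar - aε‖ ^ 2 ≤ ε * ⟪lε, lstar - lε⟫ := by
    have hadd : 0 ≤ ⟪l - mulVecE K astar, lε - lstar⟫
        + ⟪l - mulVecE K aε + ε • lε, lstar - lε⟫ := add_nonneg h1 h2
    have hexp : ⟪l - mulVecE K astar, lε - lstar⟫
        + ⟪l - mulVecE K aε + ε • lε, lstar - lε⟫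
        = ⟪mulVecE K astar - mulVecE K aε, lstar - lε⟫ + ε * ⟪lε, lstar - lε⟫ := by
      simp only [inner_sub_left, inner_sub_right, inner_add_left, real_inner_smul_left]
      ring
    rw [hexp] at hadd
    have hsw : ⟪mulVecE K astar - mulVecE K aε, lstar - lε⟫
        = - ⟪M astar - M aε, astar - aε⟫ := by
      rw [← mulVecE_sub, real_inner_comm, ← mulVecE_adjoint, hTg]
      rw [← inner_neg_left]
      congr 1; abel
    rw [hsw] at hadd
    have := hmono astar aε
    linarith
  -- bound the inner product
  have hip : ⟪lε, lstar - lε⟫ ≤ ‖lstar‖ * ‖lstar - lε‖ := by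
    have : ⟪lε, lstar - lε⟫ = ⟪lstar, lstar - lε⟫ - ‖lstar - lε‖ ^ 2 := by
      rw [← real_inner_self_eq_norm_sq, ← inner_sub_left]
      congr 1; abel
    rw [this]
    have := real_inner_le_norm lstar (lstar - lε)
    nlinarith [sq_nonneg ‖lstar - lε‖]
  set d := ‖astar - aε‖ with hd
  have hd0 : 0 ≤ d := norm_nonneg _
  have hls : 0 ≤ ‖lstar‖ := norm_nonneg _
  have hchain : ν * d ^ 2 ≤ ε * ‖lstar‖ * (L / c) * d := by
    have h3 : ‖lstar - lε‖ ≤ L / c * d := by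
      rw [div_mul_eq_mul_div, le_div_iff₀ hc]
      nlinarith [hstep2]
    have h4 : ε * ⟪lε, lstar - lε⟫ ≤ ε * (‖lstar‖ * (L / c * d)) := by
      apply mul_le_mul_of_nonneg_left _ hε.le
      calc ⟪lε, lstar - lε⟫ ≤ ‖lstar‖ * ‖lstar - lε‖ := hip
      _ ≤ ‖lstar‖ * (L / c * d) := by apply mul_le_mul_of_nonneg_left h3 hls
    calc ν * d ^ 2 ≤ ε * ⟪lε, lstar - lε⟫ := hkey
    _ ≤ ε * (‖lstar‖ * (L / c * d)) := h4
    _ = ε * ‖lstar‖ * (L / c) * d := by ring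
  rw [le_div_iff₀ (by positivity)]
  rcases eq_or_lt_of_le hd0 with h | h
  · have hpos : (0:ℝ) ≤ ε * ‖lstar‖ * L := by positivity
    rw [← h]
    simpa using hpos
  · have h4 : ν * d ≤ ε * ‖lstar‖ * (L / c) := by nlinarith
    have h5 := mul_le_mul_of_nonneg_right h4 hc.le
    have h6 : ε * ‖lstar‖ * (L / c) * c = ε * ‖lstar‖ * L := by field_simp
    nlinarith
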